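/- Let H be a Hopf algebra over a field k and C a right H-comodule coalgebra. If H coacts on C commutatively, i.e. c₍₀₎ ⊗ hc₍₁₎ = c₍₀₎ ⊗ c₍₁₎h for all c ∈ C and h ∈ H, then any left H-comodule M, endowed with the trivial right H-action m·h = ε(h)m, is an H^C-SAYD module. -/

import Mathlib

open TensorProduct LinearMap

noncomputable section
namespace HCN

variable (k : Type) [Field k]

section Shortcuts
variable (X Y Z W : Type) [AddCommGroup X] [Module k X] [AddCommGroup Y] [Module k Y]
  [AddCommGroup Z] [Module k Z] [AddCommGroup W] [Module k W]
abbrev cmm : X ⊗[k] Y →ₗ[k] Y ⊗[k] X := (TensorProduct.comm k X Y).toLinearMap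
abbrev asc : (X ⊗[k] Y) ⊗[k] Z →ₗ[k] X ⊗[k] (Y ⊗[k] Z) := (TensorProduct.assoc k X Y Z).toLinearMap
abbrev ascs : X ⊗[k] (Y ⊗[k] Z) →ₗ[k] (X ⊗[k] Y) ⊗[k] Z := (TensorProduct.assoc k X Y Z).symm.toLinearMap
abbrev mid4 : (X ⊗[k] Y) ⊗[k] (Z ⊗[k] W) →ₗ[k] (X ⊗[k] Z) ⊗[k] (Y ⊗[k] W) :=
  (TensorProduct.tensorTensorTensorComm k X Y Z W).toLinearMap
end Shortcuts

section Mul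
variable (H : Type) [AddCommGroup H] [Module k H]
def opMul (μ : H ⊗[k] H →ₗ[k] H) : H ⊗[k] H →ₗ[k] H := μ ∘ₗ cmm k H H
def lmulBy (μ : H ⊗[k] H →ₗ[k] H) (h : H) : H →ₗ[k] H := μ ∘ₗ TensorProduct.mk k H H h
def rmulBy (μ : H ⊗[k] H →ₗ[k] H) (h : H) : H →ₗ[k] H := μ ∘ₗ (TensorProduct.mk k H H).flip h
variable {H}
variable {V W : Type} [AddCommGroup V] [Module k V] [AddCommGroup W] [Module k W]
def diagL (μ : H ⊗[k] H →ₗ[k] H) (ρV : V →ₗ[k] H ⊗[k] V) (ρW : W →ₗ[k] H ⊗[k] W) :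
    (V ⊗[k] W) →ₗ[k] H ⊗[k] (V ⊗[k] W) :=
  (μ.rTensor (V ⊗[k] W)) ∘ₗ mid4 k H V H W ∘ₗ (TensorProduct.map ρV ρW)
def diagR (μ : H ⊗[k] H →ₗ[k] H) (ρV : V →ₗ[k] V ⊗[k] H) (ρW : W →ₗ[k] W ⊗[k] H) :
    (V ⊗[k] W) →ₗ[k] (V ⊗[k] W) ⊗[k] H :=
  (μ.lTensor (V ⊗[k] W)) ∘ₗ mid4 k V H W H ∘ₗ (TensorProduct.map ρV ρW)
end Mul

section TpowSec
variable (A : Type) [AddCommGroup A] [Module k A]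
def Tpow : ℕ → ModuleCat k
  | 0 => ModuleCat.of k k
  | n+1 => ModuleCat.of k (A ⊗[k] (Tpow n : Type))

/-- the linear equivalence extracting the *last* tensor factor of `Tpow k A (n+1)`. -/
def epow : ∀ n : ℕ, (Tpow k A (n+1) : Type) ≃ₗ[k] (Tpow k A n : Type) ⊗[k] A
  | 0 => TensorProduct.comm k A k
  | n+1 => (LinearEquiv.lTensor A (epow n)).trans
      (TensorProduct.assoc k A (Tpow k A n : Type) A).symm
end TpowSec

section TrivCoact
variable (H : Type) [Ring H] [Algebra k H]
variable (M : Type) [AddCommGroup M] [Module k M]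
/-- the trivial left coaction `m ↦ 1 ⊗ m`. -/
def trivL : M →ₗ[k] H ⊗[k] M := TensorProduct.mk k H M 1
/-- the trivial right coaction `m ↦ m ⊗ 1`. -/
def trivR : M →ₗ[k] M ⊗[k] H := (TensorProduct.mk k M H).flip 1
/-- the trivial right action `m ⊗ h ↦ ε(h) m` associated to a counit map `ε`. -/
def trivAct (ε : H →ₗ[k] k) : M ⊗[k] H →ₗ[k] M :=
  (TensorProduct.rid k M).toLinearMap ∘ₗ (ε.lTensor M)
end TrivCoact

section TpowCoact
variable {H : Type} [Ring H] [Algebra k H]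
variable {A : Type} [AddCommGroup A] [Module k A]

/-- the diagonal left coaction on `Tpow k A n` induced by a left coaction on `A`
(with respect to a multiplication map `μ` on `H`). -/
def TpowρL (μ : H ⊗[k] H →ₗ[k] H) (ρA : A →ₗ[k] H ⊗[k] A) :
    ∀ n : ℕ, (Tpow k A n : Type) →ₗ[k] H ⊗[k] (Tpow k A n : Type)
  | 0 => trivL k H k
  | n+1 => diagL k μ ρA (TpowρL μ ρA n)

/-- the diagonal right coaction on `Tpow k A n` induced by a right coaction on `A`. -/
def TpowρR (μ : H ⊗[k] H →ₗ[k] H) (ρA : A →ₗ[k] A ⊗[k] H) :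
    ∀ n : ℕ, (Tpow k A n : Type) →ₗ[k] (Tpow k A n : Type) ⊗[k] H
  | 0 => trivR k H k
  | n+1 => diagR k μ ρA (TpowρR μ ρA n)

end TpowCoact

section TwistSec
variable {H M : Type} [AddCommGroup H] [Module k H] [AddCommGroup M] [Module k M]

/-- the anti-Yetter--Drinfeld twist map
`h ⊗ (g ⊗ m) ↦ S(h⁽³⁾) g h⁽¹⁾ ⊗ m · h⁽²⁾`, expressed diagrammatically in terms of a
multiplication `μ`, a comultiplication `Δ` and an antipode `S` of `H` and a right action
`act` of `H` on `M`. -/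
def Twist (μ : H ⊗[k] H →ₗ[k] H) (Δ : H →ₗ[k] H ⊗[k] H) (S : H →ₗ[k] H)
    (act : M ⊗[k] H →ₗ[k] M) : H ⊗[k] (H ⊗[k] M) →ₗ[k] H ⊗[k] M :=
  letI Δ₂ : H →ₗ[k] H ⊗[k] (H ⊗[k] H) := (Δ.lTensor H) ∘ₗ Δ
  letI actc : H ⊗[k] M →ₗ[k] M := act ∘ₗ cmm k H M
  letI sm : H ⊗[k] H →ₗ[k] H := opMul k H μ
  letI u : (H ⊗[k] H) ⊗[k] M →ₗ[k] H ⊗[k] M :=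
    (S.rTensor M) ∘ₗ (actc.lTensor H) ∘ₗ asc k H H M ∘ₗ ((cmm k H H).rTensor M)
  (sm.rTensor M) ∘ₗ ascs k H H M ∘ₗ (u.lTensor H) ∘ₗ
    (sm.rTensor ((H ⊗[k] H) ⊗[k] M)) ∘ₗ mid4 k H (H ⊗[k] H) H M ∘ₗ (Δ₂.rTensor (H ⊗[k] M))

/-- the right-coaction version of the anti-Yetter--Drinfeld twist map:
`(m ⊗ g) ⊗ h ↦ m · h⁽²⁾ ⊗ S(h⁽³⁾) g h⁽¹⁾`. -/
def TwistR (μ : H ⊗[k] H →ₗ[k] H) (Δ : H →ₗ[k] H ⊗[k] H) (S : H →ₗ[k] H)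
    (act : M ⊗[k] H →ₗ[k] M) : (M ⊗[k] H) ⊗[k] H →ₗ[k] M ⊗[k] H :=
  cmm k H M ∘ₗ Twist k μ Δ S act ∘ₗ ((cmm k M H).lTensor H) ∘ₗ cmm k (M ⊗[k] H) H

end TwistSec

section ComodLaws
variable {H : Type} [Ring H] [Bialgebra k H]
variable {V : Type} [AddCommGroup V] [Module k V]

/-- coassociativity of a left `H`-coaction. -/
def IsCoassocL (ρ : V →ₗ[k] H ⊗[k] V) : Prop :=
  ρ.lTensor H ∘ₗ ρ = asc k H H V ∘ₗ ((Coalgebra.comul (R := k) (A := H)).rTensor V) ∘ₗ ρ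

/-- counitality of a left `H`-coaction. -/
def IsCounitalL (ρ : V →ₗ[k] H ⊗[k] V) : Prop :=
  (TensorProduct.lid k V).toLinearMap ∘ₗ ((Coalgebra.counit (R := k) (A := H)).rTensor V) ∘ₗ ρ
    = LinearMap.id

/-- coassociativity of a right `H`-coaction. -/
def IsCoassocR (ρ : V →ₗ[k] V ⊗[k] H) : Prop :=
  ρ.rTensor H ∘ₗ ρ = ascs k V H H ∘ₗ ((Coalgebra.comul (R := k) (A := H)).lTensor V) ∘ₗ ρ

/-- counitality of a right `H`-coaction. -/
def IsCounitalR (ρ : V →ₗ[k] V ⊗[k] H) : Prop :=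
  (TensorProduct.rid k V).toLinearMap ∘ₗ ((Coalgebra.counit (R := k) (A := H)).lTensor V) ∘ₗ ρ
    = LinearMap.id

end ComodLaws

section ComodAlg
variable {H : Type} [Ring H] [Bialgebra k H]

/-- `A` is a left `H`-comodule algebra via the coaction `ρ`:  `ρ` is a counital coassociative
coaction which is moreover a morphism of unital algebras. -/
def IsComodAlgL {A : Type} [Ring A] [Algebra k A] (ρ : A →ₗ[k] H ⊗[k] A) : Prop :=
  IsCoassocL k ρ ∧ IsCounitalL k ρ ∧ ρ 1 = 1 ∧ ∀ a b : A, ρ (a * b) = ρ a * ρ b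

/-- `A` is a right `H`-comodule algebra via the coaction `ρ`. -/
def IsComodAlgR {A : Type} [Ring A] [Algebra k A] (ρ : A →ₗ[k] A ⊗[k] H) : Prop :=
  IsCoassocR k ρ ∧ IsCounitalR k ρ ∧ ρ 1 = 1 ∧ ∀ a b : A, ρ (a * b) = ρ a * ρ b

/-- `C` is a right `H`-comodule coalgebra via the coaction `ρ`:  `ρ` is a counital
coassociative coaction which is moreover a morphism of coalgebras, i.e.
`c₍₀₎⁽¹⁾ ⊗ c₍₀₎⁽²⁾ ⊗ c₍₁₎ = c⁽¹⁾₍₀₎ ⊗ c⁽²⁾₍₀₎ ⊗ c⁽¹⁾₍₁₎c⁽²⁾₍₁₎` and `ε(c₍₀₎)c₍₁₎ = ε(c)1`. -/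
def IsComodCoalgR {C : Type} [AddCommGroup C] [Module k C] [Coalgebra k C]
    (ρ : C →ₗ[k] C ⊗[k] H) : Prop :=
  IsCoassocR k ρ ∧ IsCounitalR k ρ
  ∧ ((Coalgebra.comul (R := k) (A := C)).rTensor H) ∘ₗ ρ
      = ((LinearMap.mul' k H).lTensor (C ⊗[k] C)) ∘ₗ mid4 k C H C H
          ∘ₗ (TensorProduct.map ρ ρ) ∘ₗ (Coalgebra.comul (R := k) (A := C))
  ∧ (TensorProduct.lid k H).toLinearMap ∘ₗ ((Coalgebra.counit (R := k) (A := C)).rTensor H) ∘ₗ ρ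
      = (Algebra.linearMap k H) ∘ₗ (Coalgebra.counit (R := k) (A := C))

end ComodAlg

section Actions
variable {H : Type} [Ring H] [Algebra k H]
variable {M : Type} [AddCommGroup M] [Module k M]

/-- `act` is a unital associative right action of the algebra `H` on `M`. -/
def IsRAct (act : M ⊗[k] H →ₗ[k] M) : Prop :=
  (∀ m : M, act (m ⊗ₜ[k] 1) = m) ∧
    ∀ (m : M) (g h : H), act (act (m ⊗ₜ[k] g) ⊗ₜ[k] h) = act (m ⊗ₜ[k] (g * h))

/-- `act` is a unital associative right action of `(H, μ, e)` on `M` where the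
multiplication `μ` and unit `e` are given explicitly. -/
def IsRActμ (μ : H ⊗[k] H →ₗ[k] H) (e : H) (act : M ⊗[k] H →ₗ[k] M) : Prop :=
  (∀ m : M, act (m ⊗ₜ[k] e) = m) ∧
    ∀ (m : M) (g h : H), act (act (m ⊗ₜ[k] g) ⊗ₜ[k] h) = act (m ⊗ₜ[k] μ (g ⊗ₜ[k] h))

end Actions

section ModAlg
variable {H : Type} [Ring H] [Bialgebra k H]

/-- `β` is a left action of the bialgebra `H` on `A` making `A` a left `H`-module algebra. -/
def IsModuleAlgL {A : Type} [Ring A] [Algebra k A]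
    (β : H ⊗[k] A →ₗ[k] A) : Prop :=
  (∀ a : A, β (1 ⊗ₜ[k] a) = a)
  ∧ (∀ (g h : H) (a : A), β (g ⊗ₜ[k] β (h ⊗ₜ[k] a)) = β ((g * h) ⊗ₜ[k] a))
  ∧ (β ∘ₗ ((LinearMap.mul' k A).lTensor H)
      = (LinearMap.mul' k A) ∘ₗ (TensorProduct.map β β) ∘ₗ mid4 k H H A A
          ∘ₗ ((Coalgebra.comul (R := k) (A := H)).rTensor (A ⊗[k] A)))
  ∧ (∀ h : H, β (h ⊗ₜ[k] (1 : A)) = (Coalgebra.counit (R := k) (A := H) h) • (1 : A))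

end ModAlg

section LeftSAYD
variable {H : Type} [Ring H] [HopfAlgebra k H]
variable {A M : Type} [AddCommGroup A] [Module k A] [AddCommGroup M] [Module k M]

/-- colinearity of `φ : V → M` with respect to left `H`-coactions. -/
def IsColinL {V : Type} [AddCommGroup V] [Module k V]
    (ρV : V →ₗ[k] H ⊗[k] V) (ρM : M →ₗ[k] H ⊗[k] M) (φ : V →ₗ[k] M) : Prop :=
  ρM ∘ₗ φ = φ.lTensor H ∘ₗ ρV

/-- the `^A H`-anti-Yetter--Drinfeld condition for a colinear map `φ : A ⊗ W → M`:
`(φ(a₍₀₎ ⊗ w) · a₍₋₁₎)₍₋₁₎ ⊗ (φ(a₍₀₎ ⊗ w) · a₍₋₁₎)₍₀₎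
  = S(a₍₋₁₎⁽³⁾) φ(a₍₀₎ ⊗ w)₍₋₁₎ a₍₋₁₎⁽¹⁾ ⊗ φ(a₍₀₎ ⊗ w)₍₀₎ · a₍₋₁₎⁽²⁾`. -/
def AYDcondL {W : Type} [AddCommGroup W] [Module k W]
    (ρA : A →ₗ[k] H ⊗[k] A) (ρM : M →ₗ[k] H ⊗[k] M) (act : M ⊗[k] H →ₗ[k] M)
    (φ : (A ⊗[k] W) →ₗ[k] M) : Prop :=
  ρM ∘ₗ act ∘ₗ cmm k H M ∘ₗ (φ.lTensor H) ∘ₗ asc k H A W ∘ₗ (ρA.rTensor W)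
  = Twist k (LinearMap.mul' k H) (Coalgebra.comul (R := k)) (HopfAlgebra.antipode (R := k)) act
      ∘ₗ ((ρM ∘ₗ φ).lTensor H) ∘ₗ asc k H A W ∘ₗ (ρA.rTensor W)

/-- the stability condition for a map `φ : V → M`:  `φ(v₍₀₎) · v₍₋₁₎ = φ(v)`. -/
def StabCondL {V : Type} [AddCommGroup V] [Module k V]
    (ρV : V →ₗ[k] H ⊗[k] V) (act : M ⊗[k] H →ₗ[k] M) (φ : V →ₗ[k] M) : Prop :=
  act ∘ₗ cmm k H M ∘ₗ (φ.lTensor H) ∘ₗ ρV = φ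

/-- `M` (a module and comodule over `H`) is an `^A H`-SAYD module for the left `H`-comodule
(algebra) `A`:  every `H`-colinear map `φ : A^{⊗(n+1)} → M` (with respect to the diagonal
coaction) satisfies the `^A H`-AYD and stability conditions. -/
def IsAHSAYDL (ρA : A →ₗ[k] H ⊗[k] A) (ρM : M →ₗ[k] H ⊗[k] M)
    (act : M ⊗[k] H →ₗ[k] M) : Prop :=
  ∀ n : ℕ, ∀ φ : (A ⊗[k] (Tpow k A n : Type)) →ₗ[k] M,
    IsColinL k (TpowρL k (LinearMap.mul' k H) ρA (n + 1)) ρM φ →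
      AYDcondL k ρA ρM act φ ∧ StabCondL k (TpowρL k (LinearMap.mul' k H) ρA (n + 1)) act φ

/-- the left-coaction rotation map on `Tpow k A (n+1)`:
`a₀ ⊗ ⋯ ⊗ aₙ ↦ aₙ₍₋₁₎ ⊗ (aₙ₍₀₎ ⊗ a₀ ⊗ ⋯ ⊗ aₙ₋₁)`. -/
def rotρL (ρA : A →ₗ[k] H ⊗[k] A) (n : ℕ) :
    (Tpow k A (n+1) : Type) →ₗ[k] H ⊗[k] (Tpow k A (n+1) : Type) :=
  asc k H A (Tpow k A n : Type) ∘ₗ cmm k (Tpow k A n : Type) (H ⊗[k] A)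
    ∘ₗ (ρA.lTensor (Tpow k A n : Type)) ∘ₗ (epow k A n).toLinearMap

/-- the cyclic operator `τₙ` on `Hom(A^{⊗(n+1)}, M)`:
`(τₙ f)(a₀ ⊗ ⋯ ⊗ aₙ) = f(aₙ₍₀₎ ⊗ a₀ ⊗ ⋯ ⊗ aₙ₋₁) · aₙ₍₋₁₎`. -/
def tauL (ρA : A →ₗ[k] H ⊗[k] A) (act : M ⊗[k] H →ₗ[k] M) (n : ℕ)
    (φ : (Tpow k A (n+1) : Type) →ₗ[k] M) : (Tpow k A (n+1) : Type) →ₗ[k] M :=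
  act ∘ₗ cmm k H M ∘ₗ (φ.lTensor H) ∘ₗ rotρL k ρA n

/-- `M` is an `^A H`-HCC (Hopf cyclic coefficients) for the left `H`-comodule algebra `A`:
the cyclic operator `τₙ` is well defined on the `H`-colinear maps `A^{⊗(n+1)} → M`
(so the whole cocyclic structure is well defined) and satisfies `τₙ^{n+1} = id`, making
`Hom^H(A^{⊗(n+1)}, M)` a cocyclic module. -/
def IsAHHCCL (ρA : A →ₗ[k] H ⊗[k] A) (ρM : M →ₗ[k] H ⊗[k] M)
    (act : M ⊗[k] H →ₗ[k] M) : Prop :=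
  ∀ n : ℕ, ∀ φ : (Tpow k A (n+1) : Type) →ₗ[k] M,
    IsColinL k (TpowρL k (LinearMap.mul' k H) ρA (n + 1)) ρM φ →
      IsColinL k (TpowρL k (LinearMap.mul' k H) ρA (n + 1)) ρM (tauL k ρA act n φ)
      ∧ (tauL k ρA act n)^[n+1] φ = φ

/-- `M` is a (right-left) stable anti-Yetter--Drinfeld module over `H`:
`(m·h)₍₋₁₎ ⊗ (m·h)₍₀₎ = S(h⁽³⁾) m₍₋₁₎ h⁽¹⁾ ⊗ m₍₀₎ · h⁽²⁾` and `m₍₀₎ · m₍₋₁₎ = m`. -/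
def IsSAYD (ρM : M →ₗ[k] H ⊗[k] M) (act : M ⊗[k] H →ₗ[k] M) : Prop :=
  (ρM ∘ₗ act
    = Twist k (LinearMap.mul' k H) (Coalgebra.comul (R := k)) (HopfAlgebra.antipode (R := k)) act
        ∘ₗ (ρM.lTensor H) ∘ₗ cmm k M H)
  ∧ act ∘ₗ cmm k H M ∘ₗ ρM = LinearMap.id

end LeftSAYD
section Characters
variable {H : Type} [Ring H] [HopfAlgebra k H]

/-- `σ` is a group-like element of `H`. -/
def IsGrouplike (σ : H) : Prop :=
  Coalgebra.comul (R := k) σ = σ ⊗ₜ[k] σ ∧ Coalgebra.counit (R := k) σ = 1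

/-- the `δ`-twisted antipode `S_δ(h) = δ(h⁽¹⁾) S(h⁽²⁾)` of a character `δ : H → k`. -/
def Sdelta (δ : H →ₐ[k] k) : H →ₗ[k] H :=
  (TensorProduct.lid k H).toLinearMap
    ∘ₗ (TensorProduct.map δ.toLinearMap (HopfAlgebra.antipode (R := k)))
    ∘ₗ (Coalgebra.comul (R := k))

/-- the right action of `H` on `k` through a character `δ` : `x · h = δ(h) x`. -/
def actChar (δ : H →ₐ[k] k) : k ⊗[k] H →ₗ[k] k :=
  (TensorProduct.lid k k).toLinearMap ∘ₗ (δ.toLinearMap.lTensor k)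

/-- the left coaction of `H` on `k` given by a (group-like) element `σ` : `x ↦ σ ⊗ x`. -/
def coactGrouplike (σ : H) : k →ₗ[k] H ⊗[k] k := TensorProduct.mk k H k σ

end Characters

section RightSAYD
/- The right-coaction versions, with the Hopf structure maps `μ`, `Δ`, `S` given explicitly
(so that they can be applied to the bicrossed product Hopf algebra structure on `F ⊗ U`). -/
variable {H : Type} [Ring H] [Algebra k H]
variable {A M : Type} [AddCommGroup A] [Module k A] [AddCommGroup M] [Module k M]

/-- colinearity of `φ : V → M` with respect to right `H`-coactions. -/
def IsColinR {V : Type} [AddCommGroup V] [Module k V]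
    (ρV : V →ₗ[k] V ⊗[k] H) (ρM : M →ₗ[k] M ⊗[k] H) (φ : V →ₗ[k] M) : Prop :=
  ρM ∘ₗ φ = φ.rTensor H ∘ₗ ρV

/-- the canonical map `A ⊗ W → (A ⊗ W) ⊗ H`, `a ⊗ w ↦ (a₍₀₎ ⊗ w) ⊗ a₍₁₎`,
coacting on the first tensor factor only. -/
def coactFirstR {W : Type} [AddCommGroup W] [Module k W] (ρA : A →ₗ[k] A ⊗[k] H) :
    (A ⊗[k] W) →ₗ[k] (A ⊗[k] W) ⊗[k] H :=
  ascs k A W H ∘ₗ ((cmm k H W).lTensor A) ∘ₗ asc k A H W ∘ₗ (ρA.rTensor W)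

/-- the right-coaction version of the `^A H`-anti-Yetter--Drinfeld condition for a
colinear map `φ : A ⊗ W → M`. -/
def AYDcondR {W : Type} [AddCommGroup W] [Module k W]
    (μ : H ⊗[k] H →ₗ[k] H) (Δ : H →ₗ[k] H ⊗[k] H) (S : H →ₗ[k] H)
    (ρA : A →ₗ[k] A ⊗[k] H) (ρM : M →ₗ[k] M ⊗[k] H) (act : M ⊗[k] H →ₗ[k] M)
    (φ : (A ⊗[k] W) →ₗ[k] M) : Prop :=
  ρM ∘ₗ act ∘ₗ (φ.rTensor H) ∘ₗ coactFirstR k ρA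
  = TwistR k μ Δ S act ∘ₗ ((ρM ∘ₗ φ).rTensor H) ∘ₗ coactFirstR k ρA

/-- the right-coaction stability condition : `φ(v₍₀₎) · v₍₁₎ = φ(v)`. -/
def StabCondR {V : Type} [AddCommGroup V] [Module k V]
    (ρV : V →ₗ[k] V ⊗[k] H) (act : M ⊗[k] H →ₗ[k] M) (φ : V →ₗ[k] M) : Prop :=
  act ∘ₗ (φ.rTensor H) ∘ₗ ρV = φ

/-- `M` is an `^A H`-SAYD module for a *right* `H`-comodule (algebra) `A`, where the Hopf
structure maps `μ`, `Δ`, `S` of `H` are given explicitly. -/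
def IsAHSAYDR (μ : H ⊗[k] H →ₗ[k] H) (Δ : H →ₗ[k] H ⊗[k] H) (S : H →ₗ[k] H)
    (ρA : A →ₗ[k] A ⊗[k] H) (ρM : M →ₗ[k] M ⊗[k] H) (act : M ⊗[k] H →ₗ[k] M) : Prop :=
  ∀ n : ℕ, ∀ φ : (A ⊗[k] (Tpow k A n : Type)) →ₗ[k] M,
    IsColinR k (TpowρR k μ ρA (n + 1)) ρM φ →
      AYDcondR k μ Δ S ρA ρM act φ ∧ StabCondR k (TpowρR k μ ρA (n + 1)) act φ

end RightSAYD
section CotensorSide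
variable {H : Type} [Ring H] [HopfAlgebra k H]
variable {C M : Type} [AddCommGroup C] [Module k C] [AddCommGroup M] [Module k M]

/-- the cotensor defect map `V ⊗ M → V ⊗ (H ⊗ M)`, whose kernel is the cotensor product
`V □_H M` of a right `H`-comodule `V` and a left `H`-comodule `M`. -/
def cotensorDefect {V : Type} [AddCommGroup V] [Module k V]
    (ρV : V →ₗ[k] V ⊗[k] H) (ρM : M →ₗ[k] H ⊗[k] M) :
    V ⊗[k] M →ₗ[k] V ⊗[k] (H ⊗[k] M) :=
  asc k V H M ∘ₗ (ρV.rTensor M) - (ρM.lTensor V)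

/-- the map `v ⊗ m ↦ v₍₀₎ ⊗ m · v₍₁₎`. -/
def stabMapC {V : Type} [AddCommGroup V] [Module k V]
    (ρV : V →ₗ[k] V ⊗[k] H) (act : M ⊗[k] H →ₗ[k] M) : V ⊗[k] M →ₗ[k] V ⊗[k] M :=
  ((act ∘ₗ cmm k H M).lTensor V) ∘ₗ asc k V H M ∘ₗ (ρV.rTensor M)

/-- the `H^C`-anti-Yetter--Drinfeld condition:
`c₍₀₎ ⊗ (m·c₍₁₎)₍₋₁₎ ⊗ (m·c₍₁₎)₍₀₎ = c₍₀₎ ⊗ S(c₍₁₎⁽³⁾) m₍₋₁₎ c₍₁₎⁽¹⁾ ⊗ m₍₀₎ · c₍₁₎⁽²⁾`. -/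
def AYDcondC (ρC : C →ₗ[k] C ⊗[k] H) (ρM : M →ₗ[k] H ⊗[k] M)
    (act : M ⊗[k] H →ₗ[k] M) : Prop :=
  ((ρM ∘ₗ act ∘ₗ cmm k H M).lTensor C) ∘ₗ asc k C H M ∘ₗ (ρC.rTensor M)
  = ((Twist k (LinearMap.mul' k H) (Coalgebra.comul (R := k))
        (HopfAlgebra.antipode (R := k)) act ∘ₗ (ρM.lTensor H)).lTensor C)
      ∘ₗ asc k C H M ∘ₗ (ρC.rTensor M)

/-- `M` is an `H^C`-SAYD module for the right `H`-comodule (coalgebra) `C` :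
the `H^C`-AYD condition holds, and the stability condition
`d̃₍₀₎ ⊗ m · d̃₍₁₎ = d̃ ⊗ m` holds on the cotensor product `C^{⊗(n+1)} □_H M`. -/
def IsHCSAYD (ρC : C →ₗ[k] C ⊗[k] H) (ρM : M →ₗ[k] H ⊗[k] M)
    (act : M ⊗[k] H →ₗ[k] M) : Prop :=
  AYDcondC k ρC ρM act
  ∧ ∀ n : ℕ, ∀ x ∈ LinearMap.ker
      (cotensorDefect k (TpowρR k (LinearMap.mul' k H) ρC (n + 1)) ρM),
      stabMapC k (TpowρR k (LinearMap.mul' k H) ρC (n + 1)) act x = x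

/-- the cyclic operator `τₙ` on `C^{⊗(n+1)} ⊗ M`:
`c₀ ⊗ ⋯ ⊗ cₙ ⊗ m ↦ c₁ ⊗ ⋯ ⊗ cₙ ⊗ c₀₍₀₎ ⊗ m · c₀₍₁₎`. -/
def tauC (ρC : C →ₗ[k] C ⊗[k] H) (act : M ⊗[k] H →ₗ[k] M) (n : ℕ) :
    ((Tpow k C (n+1) : Type) ⊗[k] M) →ₗ[k] ((Tpow k C (n+1) : Type) ⊗[k] M) :=
  letI W : Type := (Tpow k C n : Type)
  (((epow k C n).symm.toLinearMap).rTensor M)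
    ∘ₗ ((act ∘ₗ cmm k H M).lTensor (W ⊗[k] C))
    ∘ₗ asc k (W ⊗[k] C) H M
    ∘ₗ ((ascs k W C H).rTensor M)
    ∘ₗ ((cmm k (C ⊗[k] H) W).rTensor M)
    ∘ₗ ((ρC.rTensor W).rTensor M)

/-- `M` is an `H^C`-HCC (Hopf cyclic coefficients) for the right `H`-comodule coalgebra `C` :
the cyclic operator `τₙ` is well defined on the cotensor product `C^{⊗(n+1)} □_H M`
(so the whole cocyclic structure is well defined) and satisfies `τₙ^{n+1} = id` on it,
making `C^{⊗(n+1)} □_H M` a cocyclic module. -/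
def IsHCHCC (ρC : C →ₗ[k] C ⊗[k] H) (ρM : M →ₗ[k] H ⊗[k] M)
    (act : M ⊗[k] H →ₗ[k] M) : Prop :=
  ∀ n : ℕ, ∀ x ∈ LinearMap.ker
      (cotensorDefect k (TpowρR k (LinearMap.mul' k H) ρC (n + 1)) ρM),
    tauC k ρC act n x ∈ LinearMap.ker
      (cotensorDefect k (TpowρR k (LinearMap.mul' k H) ρC (n + 1)) ρM)
    ∧ (tauC k ρC act n)^[n+1] x = x

end CotensorSide

section CommCocommCond
variable {H : Type} [AddCommGroup H] [Module k H]
variable {A C W : Type} [AddCommGroup A] [Module k A] [AddCommGroup C] [Module k C]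
  [AddCommGroup W] [Module k W]

/-- auxiliary map `(x ⊗ y) ⊗ z ↦ (z * x) ⊗ y`. -/
def muL (μ : H ⊗[k] H →ₗ[k] H) : (H ⊗[k] H) ⊗[k] H →ₗ[k] H ⊗[k] H :=
  (μ.rTensor H) ∘ₗ ascs k H H H ∘ₗ cmm k (H ⊗[k] H) H

/-- auxiliary map `(x ⊗ y) ⊗ z ↦ (y * z) ⊗ x`. -/
def muR (μ : H ⊗[k] H →ₗ[k] H) : (H ⊗[k] H) ⊗[k] H →ₗ[k] H ⊗[k] H :=
  cmm k H H ∘ₗ (μ.lTensor H) ∘ₗ asc k H H H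

/-- auxiliary map `z ⊗ (x ⊗ y) ↦ (z * x) ⊗ y`. -/
def nuL (μ : H ⊗[k] H →ₗ[k] H) : H ⊗[k] (H ⊗[k] H) →ₗ[k] H ⊗[k] H :=
  (μ.rTensor H) ∘ₗ ascs k H H H

/-- auxiliary map `z ⊗ (x ⊗ y) ↦ (y * z) ⊗ x`. -/
def nuR (μ : H ⊗[k] H →ₗ[k] H) : H ⊗[k] (H ⊗[k] H) →ₗ[k] H ⊗[k] H :=
  cmm k H H ∘ₗ (μ.lTensor H) ∘ₗ asc k H H H ∘ₗ cmm k H (H ⊗[k] H)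

/-- `H` coacts *cocommutatively* on the pair `(A, W)` (`A` and `W` left `H`-comodules):
`w₍₋₁₎ a₍₋₁₎⁽¹⁾ ⊗ a₍₋₁₎⁽²⁾ ⊗ a₍₀₎ ⊗ w₍₀₎ = a₍₋₁₎⁽²⁾ w₍₋₁₎ ⊗ a₍₋₁₎⁽¹⁾ ⊗ a₍₀₎ ⊗ w₍₀₎`. -/
def CocommCondL (μ : H ⊗[k] H →ₗ[k] H) (Δ : H →ₗ[k] H ⊗[k] H)
    (ρA : A →ₗ[k] H ⊗[k] A) (ρW : W →ₗ[k] H ⊗[k] W) : Prop :=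
  letI base : A ⊗[k] W →ₗ[k] ((H ⊗[k] H) ⊗[k] H) ⊗[k] (A ⊗[k] W) :=
    mid4 k (H ⊗[k] H) A H W ∘ₗ (TensorProduct.map ((Δ.rTensor A) ∘ₗ ρA) ρW)
  ((muL k μ).rTensor (A ⊗[k] W)) ∘ₗ base = ((muR k μ).rTensor (A ⊗[k] W)) ∘ₗ base

/-- `H` coacts *cocommutatively* on the pair `(W, C)` (`W` and `C` right `H`-comodules):
`w₍₀₎ ⊗ c₍₀₎ ⊗ w₍₁₎ c₍₁₎⁽¹⁾ ⊗ c₍₁₎⁽²⁾ = w₍₀₎ ⊗ c₍₀₎ ⊗ c₍₁₎⁽²⁾ w₍₁₎ ⊗ c₍₁₎⁽¹⁾`. -/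
def CocommCondR (μ : H ⊗[k] H →ₗ[k] H) (Δ : H →ₗ[k] H ⊗[k] H)
    (ρW : W →ₗ[k] W ⊗[k] H) (ρC : C →ₗ[k] C ⊗[k] H) : Prop :=
  letI base : W ⊗[k] C →ₗ[k] (W ⊗[k] C) ⊗[k] (H ⊗[k] (H ⊗[k] H)) :=
    mid4 k W H C (H ⊗[k] H) ∘ₗ (TensorProduct.map ρW ((Δ.lTensor C) ∘ₗ ρC))
  ((nuL k μ).lTensor (W ⊗[k] C)) ∘ₗ base = ((nuR k μ).lTensor (W ⊗[k] C)) ∘ₗ base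

end CommCocommCond
section Bicross
variable (F U : Type) [Ring F] [HopfAlgebra k F] [Ring U] [HopfAlgebra k U]

/-- inclusion `F → F ⊗ U`, `f ↦ f ⊗ 1`. -/
def jF : F →ₗ[k] F ⊗[k] U := (TensorProduct.mk k F U).flip 1
/-- inclusion `U → F ⊗ U`, `u ↦ 1 ⊗ u`. -/
def jU : U →ₗ[k] F ⊗[k] U := TensorProduct.mk k F U 1

/-- the right coaction of `H = F ⋈ U` on `F`: `f ↦ f⁽¹⁾ ⊗ (f⁽²⁾ ⋈ 1)`. -/
def bcoactF : F →ₗ[k] F ⊗[k] (F ⊗[k] U) :=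
  ((jF k F U).lTensor F) ∘ₗ (Coalgebra.comul (R := k) (A := F))

variable {F U}
variable (α : U ⊗[k] F →ₗ[k] F) (ρU : U →ₗ[k] U ⊗[k] F)

/-- the multiplication of the bicrossed product `F ⋈ U`:
`(f ⋈ u)(g ⋈ v) = f (u⁽¹⁾ ▷ g) ⋈ u⁽²⁾ v`, where `▷` is the action `α`. -/
def bmul : (F ⊗[k] U) ⊗[k] (F ⊗[k] U) →ₗ[k] F ⊗[k] U :=
  letI lam : (F ⊗[k] U) ⊗[k] F →ₗ[k] F :=
    (LinearMap.mul' k F) ∘ₗ (α.lTensor F) ∘ₗ asc k F U F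
  (TensorProduct.map lam (LinearMap.mul' k U))
    ∘ₗ mid4 k (F ⊗[k] U) U F U
    ∘ₗ ((ascs k F U U).rTensor (F ⊗[k] U))
    ∘ₗ (((Coalgebra.comul (R := k) (A := U)).lTensor F).rTensor (F ⊗[k] U))

/-- the comultiplication of the bicrossed product `F ⋈ U`:
`Δ(f ⋈ u) = (f⁽¹⁾ ⋈ u⁽¹⁾₍₀₎) ⊗ (f⁽²⁾ u⁽¹⁾₍₁₎ ⋈ u⁽²⁾)`, where `u ↦ u₍₀₎ ⊗ u₍₁₎` is the
coaction `ρU` of `F` on `U`. -/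
def bcomul : (F ⊗[k] U) →ₗ[k] (F ⊗[k] U) ⊗[k] (F ⊗[k] U) :=
  letI w : F ⊗[k] (F ⊗[k] U) →ₗ[k] F ⊗[k] U :=
    ((opMul k F (LinearMap.mul' k F)).rTensor U) ∘ₗ ascs k F F U
  (w.lTensor (F ⊗[k] U))
    ∘ₗ asc k (F ⊗[k] U) F (F ⊗[k] U)
    ∘ₗ ((ascs k F U F).rTensor (F ⊗[k] U))
    ∘ₗ ((ρU.lTensor F).rTensor (F ⊗[k] U))
    ∘ₗ mid4 k F F U U
    ∘ₗ (TensorProduct.map (Coalgebra.comul (R := k) (A := F))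
          (Coalgebra.comul (R := k) (A := U)))

/-- the antipode of the bicrossed product `F ⋈ U`:
`S(f ⋈ u) = (1 ⋈ S_U(u₍₀₎)) · (S_F(f u₍₁₎) ⋈ 1)`. -/
def bS : (F ⊗[k] U) →ₗ[k] F ⊗[k] U :=
  bmul k α ∘ₗ (TensorProduct.map (jU k F U ∘ₗ (HopfAlgebra.antipode (R := k) (A := U)))
      (jF k F U ∘ₗ (HopfAlgebra.antipode (R := k) (A := F))
        ∘ₗ (opMul k F (LinearMap.mul' k F))))
    ∘ₗ asc k U F F
    ∘ₗ cmm k F (U ⊗[k] F)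
    ∘ₗ (ρU.lTensor F)

/-- the right coaction of `H = F ⋈ U` on `U`: `u ↦ u₍₀₎ ⊗ (u₍₁₎ ⋈ 1)`. -/
def bcoactU : U →ₗ[k] U ⊗[k] (F ⊗[k] U) :=
  ((jF k F U).lTensor U) ∘ₗ ρU

/-- `(F, U)` together with the action `α : U ⊗ F → F` and the coaction `ρU : U → U ⊗ F`
is a matched pair of Hopf algebras, so that the bicrossed product `F ⋈ U` (with
multiplication `bmul` and comultiplication `bcomul`) is a Hopf algebra:
`F` is a left `U`-module algebra, `U` is a right `F`-comodule coalgebra, and the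
Majid compatibility conditions hold. -/
def IsMatchedPair : Prop :=
  -- `α` is a left `U`-module structure on `F`
  (∀ f : F, α ((1 : U) ⊗ₜ[k] f) = f)
  ∧ (α ∘ₗ ((LinearMap.mul' k U).rTensor F) = α ∘ₗ (α.lTensor U) ∘ₗ asc k U U F)
  -- making `F` a `U`-module algebra
  ∧ (α ∘ₗ ((LinearMap.mul' k F).lTensor U)
      = (LinearMap.mul' k F) ∘ₗ (TensorProduct.map α α) ∘ₗ mid4 k U U F F
          ∘ₗ ((Coalgebra.comul (R := k) (A := U)).rTensor (F ⊗[k] F)))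
  ∧ (∀ u : U, α (u ⊗ₜ[k] (1 : F)) = (Coalgebra.counit (R := k) (A := U) u) • (1 : F))
  -- `ρU` is a right `F`-comodule structure on `U`
  ∧ IsCoassocR k ρU ∧ IsCounitalR k ρU
  -- making `U` an `F`-comodule coalgebra
  ∧ (((Coalgebra.comul (R := k) (A := U)).rTensor F) ∘ₗ ρU
      = ((LinearMap.mul' k F).lTensor (U ⊗[k] U)) ∘ₗ mid4 k U F U F
          ∘ₗ (TensorProduct.map ρU ρU) ∘ₗ (Coalgebra.comul (R := k) (A := U)))
  ∧ ((TensorProduct.lid k F).toLinearMap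
        ∘ₗ ((Coalgebra.counit (R := k) (A := U)).rTensor F) ∘ₗ ρU
      = (Algebra.linearMap k F) ∘ₗ (Coalgebra.counit (R := k) (A := U)))
  -- `ρU(1) = 1 ⊗ 1`
  ∧ (ρU 1 = (1 : U) ⊗ₜ[k] (1 : F))
  -- multiplicativity: `ρ(uv) = u⁽¹⁾₍₀₎ v₍₀₎ ⊗ u⁽¹⁾₍₁₎ (u⁽²⁾ ▷ v₍₁₎)`
  ∧ (ρU ∘ₗ (LinearMap.mul' k U)
      = letI ζ : (((U ⊗[k] F) ⊗[k] U) ⊗[k] F) →ₗ[k] U ⊗[k] F :=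
          (TensorProduct.map (LinearMap.mul' k U) (LinearMap.mul' k F))
            ∘ₗ asc k (U ⊗[k] U) F F
            ∘ₗ ((ascs k U U F ∘ₗ ((cmm k F U).lTensor U) ∘ₗ asc k U F U).rTensor F)
        ζ ∘ₗ (α.lTensor ((U ⊗[k] F) ⊗[k] U))
          ∘ₗ mid4 k (U ⊗[k] F) U U F
          ∘ₗ ((ρU.rTensor U).rTensor (U ⊗[k] F))
          ∘ₗ (TensorProduct.map (Coalgebra.comul (R := k) (A := U)) ρU))
  -- compatibility: `u⁽²⁾₍₀₎ ⊗ (u⁽¹⁾ ▷ f) u⁽²⁾₍₁₎ = u⁽¹⁾₍₀₎ ⊗ u⁽¹⁾₍₁₎ (u⁽²⁾ ▷ f)`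
  ∧ (((opMul k F (LinearMap.mul' k F)).lTensor U) ∘ₗ asc k U F F
        ∘ₗ (α.lTensor (U ⊗[k] F)) ∘ₗ asc k (U ⊗[k] F) U F
        ∘ₗ ((cmm k U (U ⊗[k] F)).rTensor F) ∘ₗ ((ρU.lTensor U).rTensor F)
        ∘ₗ ((Coalgebra.comul (R := k) (A := U)).rTensor F)
      = ((LinearMap.mul' k F).lTensor U) ∘ₗ asc k U F F
          ∘ₗ (α.lTensor (U ⊗[k] F)) ∘ₗ asc k (U ⊗[k] F) U F
          ∘ₗ ((ρU.rTensor U).rTensor F)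
          ∘ₗ ((Coalgebra.comul (R := k) (A := U)).rTensor F))
  -- compatibility: `Δ_F(u ▷ f) = (u⁽¹⁾₍₀₎ ▷ f⁽¹⁾) ⊗ u⁽¹⁾₍₁₎ (u⁽²⁾ ▷ f⁽²⁾)`
  ∧ ((Coalgebra.comul (R := k) (A := F)) ∘ₗ α
      = letI ξ : (U ⊗[k] F) ⊗[k] F →ₗ[k] F ⊗[k] F :=
          (α.rTensor F) ∘ₗ ascs k U F F ∘ₗ ((cmm k F F).lTensor U) ∘ₗ asc k U F F
        ((LinearMap.mul' k F).lTensor F) ∘ₗ asc k F F F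
          ∘ₗ (TensorProduct.map ξ α)
          ∘ₗ mid4 k (U ⊗[k] F) U F F
          ∘ₗ ((ρU.rTensor U).rTensor (F ⊗[k] F))
          ∘ₗ (TensorProduct.map (Coalgebra.comul (R := k) (A := U))
                (Coalgebra.comul (R := k) (A := F))))
  -- compatibility: `ε(u ▷ f) = ε(u) ε(f)`
  ∧ (∀ (u : U) (f : F),
      Coalgebra.counit (R := k) (α (u ⊗ₜ[k] f))
        = Coalgebra.counit (R := k) u * Coalgebra.counit (R := k) f)

end Bicross
section CrossedProduct
variable {H : Type} [Ring H] [Algebra k H]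
variable {A B : Type} [Ring A] [Algebra k A] [Ring B] [Algebra k B]

/-- the multiplication of the crossed product algebra `A ⋊ B` for a left `H`-module
algebra `A` (action `β`) and a left `H`-comodule algebra `B` (coaction `ρB`):
`(a ⋊ b)(a' ⋊ b') = a (b₍₋₁₎ · a') ⋊ b₍₀₎ b'`. -/
def crossMul (β : H ⊗[k] A →ₗ[k] A) (ρB : B →ₗ[k] H ⊗[k] B) :
    (A ⊗[k] B) ⊗[k] (A ⊗[k] B) →ₗ[k] A ⊗[k] B :=
  letI lam : (A ⊗[k] H) ⊗[k] A →ₗ[k] A :=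
    (LinearMap.mul' k A) ∘ₗ (β.lTensor A) ∘ₗ asc k A H A
  (TensorProduct.map lam (LinearMap.mul' k B))
    ∘ₗ mid4 k (A ⊗[k] H) B A B
    ∘ₗ ((ascs k A H B).rTensor (A ⊗[k] B))
    ∘ₗ ((ρB.lTensor A).rTensor (A ⊗[k] B))

end CrossedProduct

section SimplicialOps
variable {R : Type} [AddCommGroup R] [Module k R]

/-- the rotation `a₀ ⊗ ⋯ ⊗ aₙ ↦ aₙ ⊗ a₀ ⊗ ⋯ ⊗ aₙ₋₁` on `Tpow k R (n+1)`. -/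
def rot (n : ℕ) : (Tpow k R (n+1) : Type) →ₗ[k] (Tpow k R (n+1) : Type) :=
  cmm k (Tpow k R n : Type) R ∘ₗ (epow k R n).toLinearMap

/-- `merge μ n i` multiplies the `i`-th and `(i+1)`-st tensor factors of `Tpow k R (n+2)`
(for `0 ≤ i ≤ n`; values at out-of-range indices are junk). -/
def merge (μ : R ⊗[k] R →ₗ[k] R) :
    ∀ (n i : ℕ), (Tpow k R (n+2) : Type) →ₗ[k] (Tpow k R (n+1) : Type)
  | n, 0 => (μ.rTensor (Tpow k R n : Type)) ∘ₗ ascs k R R (Tpow k R n : Type)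
  | 0, _+1 => (μ.rTensor (Tpow k R 0 : Type)) ∘ₗ ascs k R R (Tpow k R 0 : Type)
  | n+1, i+1 => (merge μ n i).lTensor R

/-- `ins e n i` inserts the element `e` in position `i+1` of `Tpow k R (n+1)`
(for `0 ≤ i ≤ n`; values at out-of-range indices are junk). -/
def ins (e : R) : ∀ (n i : ℕ), (Tpow k R (n+1) : Type) →ₗ[k] (Tpow k R (n+2) : Type)
  | n, 0 => (TensorProduct.mk k R (Tpow k R n : Type) e).lTensor R
  | 0, _+1 => (TensorProduct.mk k R (Tpow k R 0 : Type) e).lTensor R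
  | n+1, i+1 => (ins e n i).lTensor R

/-- the `i`-th coface operator of the standard cocyclic module of an algebra `(R, μ)`
(on cochains `Hom(R^{⊗(n+1)}, V)`); `i = n+1` is the twisted last coface
`(δ_{n+1} f)(r₀ ⊗ ⋯ ⊗ r_{n+1}) = f(r_{n+1} r₀ ⊗ r₁ ⊗ ⋯ ⊗ rₙ)`. -/
def faceAlg {V : Type} [AddCommGroup V] [Module k V] (μ : R ⊗[k] R →ₗ[k] R) (n i : ℕ)
    (f : (Tpow k R (n+1) : Type) →ₗ[k] V) : (Tpow k R (n+2) : Type) →ₗ[k] V :=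
  if i = n+1 then f ∘ₗ merge k μ n 0 ∘ₗ rot k (n+1) else f ∘ₗ merge k μ n i

/-- the `i`-th codegeneracy operator of the standard cocyclic module of an algebra. -/
def degAlg {V : Type} [AddCommGroup V] [Module k V] (e : R) (n i : ℕ)
    (f : (Tpow k R (n+2) : Type) →ₗ[k] V) : (Tpow k R (n+1) : Type) →ₗ[k] V :=
  f ∘ₗ ins k e n i

/-- the cyclic operator of the standard cocyclic module of an algebra:
`(τₙ f)(r₀ ⊗ ⋯ ⊗ rₙ) = f(rₙ ⊗ r₀ ⊗ ⋯ ⊗ rₙ₋₁)`. -/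
def cycAlg {V : Type} [AddCommGroup V] [Module k V] (n : ℕ)
    (f : (Tpow k R (n+1) : Type) →ₗ[k] V) : (Tpow k R (n+1) : Type) →ₗ[k] V :=
  f ∘ₗ rot k n

/-- the Hochschild coboundary `b = Σ_{i=0}^{n+1} (-1)^i δᵢ` of the standard (twisted)
cocyclic module of an algebra `(R, μ)`. -/
def bAlg {V : Type} [AddCommGroup V] [Module k V] (μ : R ⊗[k] R →ₗ[k] R) (n : ℕ)
    (f : (Tpow k R (n+1) : Type) →ₗ[k] V) : (Tpow k R (n+2) : Type) →ₗ[k] V :=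
  ∑ i ∈ Finset.range (n+2), ((-1 : ℤ)^i) • faceAlg k μ n i f

end SimplicialOps
section ModAlgSide
variable {H : Type} [Ring H] [HopfAlgebra k H]
variable {A M : Type} [AddCommGroup A] [Module k A] [AddCommGroup M] [Module k M]

/-- the diagonal left action of `H` on `Tpow k A n` induced by a left action `β` on `A`:
`h · (a₁ ⊗ ⋯ ⊗ aₙ) = h⁽¹⁾·a₁ ⊗ ⋯ ⊗ h⁽ⁿ⁾·aₙ`. -/
def actTpow (β : H ⊗[k] A →ₗ[k] A) :
    ∀ n : ℕ, H ⊗[k] (Tpow k A n : Type) →ₗ[k] (Tpow k A n : Type)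
  | 0 => (TensorProduct.lid k k).toLinearMap
      ∘ₗ ((Coalgebra.counit (R := k) (A := H)).rTensor k)
  | n+1 => (TensorProduct.map β (actTpow β n)) ∘ₗ mid4 k H H A (Tpow k A n : Type)
      ∘ₗ ((Coalgebra.comul (R := k) (A := H)).rTensor (A ⊗[k] (Tpow k A n : Type)))

/-- the left action of `H` on `M ⊗ A^{⊗(n+1)}` used to define the HKRS cocyclic module
of a module algebra: `h · (m ⊗ ã) = m · S(h⁽¹⁾) ⊗ h⁽²⁾ · ã`. -/
def actMA (β : H ⊗[k] A →ₗ[k] A) (act : M ⊗[k] H →ₗ[k] M) (n : ℕ) :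
    H ⊗[k] (M ⊗[k] (Tpow k A (n+1) : Type)) →ₗ[k] M ⊗[k] (Tpow k A (n+1) : Type) :=
  letI w : H ⊗[k] M →ₗ[k] M :=
    act ∘ₗ cmm k H M ∘ₗ ((HopfAlgebra.antipode (R := k)).rTensor M)
  (TensorProduct.map w (actTpow k β (n+1)))
    ∘ₗ mid4 k H H M (Tpow k A (n+1) : Type)
    ∘ₗ ((Coalgebra.comul (R := k) (A := H)).rTensor (M ⊗[k] (Tpow k A (n+1) : Type)))

/-- `φ : M ⊗ A^{⊗(n+1)} → k` is `H`-equivariant (i.e. `φ ∈ Hom_H(M ⊗ A^{⊗(n+1)}, k)`),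
with `k` the trivial `H`-module. -/
def IsInvariantMA (β : H ⊗[k] A →ₗ[k] A) (act : M ⊗[k] H →ₗ[k] M) (n : ℕ)
    (φ : (M ⊗[k] (Tpow k A (n+1) : Type)) →ₗ[k] k) : Prop :=
  φ ∘ₗ actMA k β act n
    = φ ∘ₗ (TensorProduct.lid k (M ⊗[k] (Tpow k A (n+1) : Type))).toLinearMap
        ∘ₗ ((Coalgebra.counit (R := k) (A := H)).rTensor
              (M ⊗[k] (Tpow k A (n+1) : Type)))

/-- the twisted rotation on `M ⊗ A^{⊗(n+1)}`:
`m ⊗ a₀ ⊗ ⋯ ⊗ aₙ ↦ m₍₀₎ ⊗ S⁻¹(m₍₋₁₎)·aₙ ⊗ a₀ ⊗ ⋯ ⊗ aₙ₋₁`. -/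
def rotMA (β : H ⊗[k] A →ₗ[k] A) (Sinv : H →ₗ[k] H) (ρM : M →ₗ[k] H ⊗[k] M) (n : ℕ) :
    M ⊗[k] (Tpow k A (n+1) : Type) →ₗ[k] M ⊗[k] (Tpow k A (n+1) : Type) :=
  (TensorProduct.leftComm k A M (Tpow k A n : Type)).toLinearMap
    ∘ₗ ((β ∘ₗ (Sinv.rTensor A)).rTensor (M ⊗[k] (Tpow k A n : Type)))
    ∘ₗ mid4 k H M A (Tpow k A n : Type)
    ∘ₗ ((rot k n).lTensor (H ⊗[k] M))
    ∘ₗ (ρM.rTensor (Tpow k A (n+1) : Type))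

/-- the cyclic operator of the HKRS cocyclic module `C^n_H(A, M) = Hom_H(M ⊗ A^{⊗(n+1)}, k)`:
`(τₙ φ)(m ⊗ a₀ ⊗ ⋯ ⊗ aₙ) = φ(m₍₀₎ ⊗ S⁻¹(m₍₋₁₎)·aₙ ⊗ a₀ ⊗ ⋯ ⊗ aₙ₋₁)`. -/
def cycMA (β : H ⊗[k] A →ₗ[k] A) (Sinv : H →ₗ[k] H) (ρM : M →ₗ[k] H ⊗[k] M) (n : ℕ)
    (φ : (M ⊗[k] (Tpow k A (n+1) : Type)) →ₗ[k] k) :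
    (M ⊗[k] (Tpow k A (n+1) : Type)) →ₗ[k] k :=
  φ ∘ₗ rotMA k β Sinv ρM n


/-- `M` is an `_A H`-SAYD coefficient module for the left `H`-module algebra `A` (in the
generalized sense): the cyclic operator of the HKRS cocyclic module
`C^n_H(A,M) = Hom_H(M ⊗ A^{⊗(n+1)}, k)` is well defined on equivariant cochains and
satisfies `τₙ^{n+1} = id`. -/
def IsMASAYD (β : H ⊗[k] A →ₗ[k] A) (Sinv : H →ₗ[k] H) (ρM : M →ₗ[k] H ⊗[k] M)
    (act : M ⊗[k] H →ₗ[k] M) : Prop :=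
  ∀ n : ℕ, ∀ φ : (M ⊗[k] (Tpow k A (n+1) : Type)) →ₗ[k] k,
    IsInvariantMA k β act n φ →
      IsInvariantMA k β act n (cycMA k β Sinv ρM n φ)
      ∧ (cycMA k β Sinv ρM n)^[n+1] φ = φ

end ModAlgSide

section ModAlgSideRing
variable {H : Type} [Ring H] [HopfAlgebra k H]
variable {A M : Type} [Ring A] [Algebra k A] [AddCommGroup M] [Module k M]

/-- the `i`-th coface of the HKRS cocyclic module `C^n_H(A, M)`; `i = n+1` is the twisted
last coface `(δ_{n+1} φ)(m ⊗ a₀ ⊗ ⋯ ⊗ a_{n+1}) = φ(m₍₀₎ ⊗ (S⁻¹(m₍₋₁₎)·a_{n+1}) a₀ ⊗ ⋯ ⊗ aₙ)`. -/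
def faceMA (β : H ⊗[k] A →ₗ[k] A) (Sinv : H →ₗ[k] H) (ρM : M →ₗ[k] H ⊗[k] M)
    (n i : ℕ) (φ : (M ⊗[k] (Tpow k A (n+1) : Type)) →ₗ[k] k) :
    (M ⊗[k] (Tpow k A (n+2) : Type)) →ₗ[k] k :=
  if i = n+1 then
    φ ∘ₗ ((merge k (LinearMap.mul' k A) n 0).lTensor M) ∘ₗ rotMA k β Sinv ρM (n+1)
  else φ ∘ₗ ((merge k (LinearMap.mul' k A) n i).lTensor M)

/-- the `i`-th codegeneracy of the HKRS cocyclic module `C^n_H(A, M)`. -/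
def degMA (n i : ℕ) (φ : (M ⊗[k] (Tpow k A (n+2) : Type)) →ₗ[k] k) :
    (M ⊗[k] (Tpow k A (n+1) : Type)) →ₗ[k] k :=
  φ ∘ₗ ((ins k (1 : A) n i).lTensor M)

/-- the Hochschild coboundary of the HKRS cocyclic module `C^n_H(A, M)`. -/
def bMA (β : H ⊗[k] A →ₗ[k] A) (Sinv : H →ₗ[k] H) (ρM : M →ₗ[k] H ⊗[k] M)
    (n : ℕ) (φ : (M ⊗[k] (Tpow k A (n+1) : Type)) →ₗ[k] k) :
    (M ⊗[k] (Tpow k A (n+2) : Type)) →ₗ[k] k :=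
  ∑ i ∈ Finset.range (n+2), ((-1 : ℤ)^i) • faceMA k β Sinv ρM n i φ

end ModAlgSideRing

section ComodAlgSide
variable {H : Type} [Ring H] [HopfAlgebra k H]
variable {B M : Type} [Ring B] [Algebra k B] [AddCommGroup M] [Module k M]

/-- the `i`-th coface of the cocyclic module `C^n_H(B, M) = Hom^H(B^{⊗(n+1)}, M)` of a left
`H`-comodule algebra `B`; `i = n+1` is the twisted last coface
`(δ_{n+1} f)(b₀ ⊗ ⋯ ⊗ b_{n+1}) = f(b_{n+1}₍₀₎ b₀ ⊗ b₁ ⊗ ⋯ ⊗ bₙ) · b_{n+1}₍₋₁₎`. -/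
def faceCB (ρB : B →ₗ[k] H ⊗[k] B) (act : M ⊗[k] H →ₗ[k] M) (n i : ℕ)
    (f : (Tpow k B (n+1) : Type) →ₗ[k] M) : (Tpow k B (n+2) : Type) →ₗ[k] M :=
  if i = n+1 then
    act ∘ₗ cmm k H M ∘ₗ ((f ∘ₗ merge k (LinearMap.mul' k B) n 0).lTensor H)
      ∘ₗ rotρL k ρB (n+1)
  else f ∘ₗ merge k (LinearMap.mul' k B) n i

/-- the `i`-th codegeneracy of `C^n_H(B, M)`. -/
def degCB (n i : ℕ) (f : (Tpow k B (n+2) : Type) →ₗ[k] M) :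
    (Tpow k B (n+1) : Type) →ₗ[k] M :=
  f ∘ₗ ins k (1 : B) n i

/-- the Hochschild coboundary of `C^n_H(B, M)`. -/
def bCB (ρB : B →ₗ[k] H ⊗[k] B) (act : M ⊗[k] H →ₗ[k] M) (n : ℕ)
    (f : (Tpow k B (n+1) : Type) →ₗ[k] M) : (Tpow k B (n+2) : Type) →ₗ[k] M :=
  ∑ i ∈ Finset.range (n+2), ((-1 : ℤ)^i) • faceCB k ρB act n i f

end ComodAlgSide
section PsiSec
variable {H : Type} [Ring H] [HopfAlgebra k H]
variable {A B M : Type} [AddCommGroup A] [Module k A] [AddCommGroup B] [Module k B]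
  [AddCommGroup M] [Module k M]

/-- the auxiliary "unzipping" map `(A ⊗ B)^{⊗ n} → H ⊗ (A^{⊗ n} ⊗ B^{⊗ n})` underlying the
cup-product map `Ψ`:
`(a₀ ⊗ b₀) ⊗ ⋯ ⊗ (aₙ ⊗ bₙ) ↦ b₀₍₋₁₎ ⋯ bₙ₍₋₁₎ ⊗
  ((S⁻¹(b₀₍₋₁₎ ⋯ bₙ₍₋₁₎)·a₀ ⊗ S⁻¹(b₁₍₋₁₎ ⋯ bₙ₍₋₁₎)·a₁ ⊗ ⋯) ⊗ (b₀₍₀₎ ⊗ ⋯ ⊗ bₙ₍₀₎))`. -/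
def Gmap (β : H ⊗[k] A →ₗ[k] A) (Sinv : H →ₗ[k] H) (ρB : B →ₗ[k] H ⊗[k] B) :
    ∀ n : ℕ, (Tpow k (A ⊗[k] B) n : Type) →ₗ[k]
      H ⊗[k] ((Tpow k A n : Type) ⊗[k] (Tpow k B n : Type))
  | 0 => (TensorProduct.mk k H (k ⊗[k] k) 1) ∘ₗ ((TensorProduct.mk k k k).flip 1)
  | n+1 =>
    letI TA : Type := (Tpow k A n : Type)
    letI TB : Type := (Tpow k B n : Type)
    letI inner : (H ⊗[k] (A ⊗[k] B)) ⊗[k] (H ⊗[k] (TA ⊗[k] TB)) →ₗ[k]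
        (A ⊗[k] TA) ⊗[k] (B ⊗[k] TB) :=
      (((β.rTensor TA) ∘ₗ ascs k H A TA).rTensor (B ⊗[k] TB))
        ∘ₗ ascs k H (A ⊗[k] TA) (B ⊗[k] TB)
        ∘ₗ ((mid4 k A B TA TB).lTensor H)
        ∘ₗ ((Sinv ∘ₗ LinearMap.mul' k H).rTensor ((A ⊗[k] B) ⊗[k] (TA ⊗[k] TB)))
        ∘ₗ mid4 k H (A ⊗[k] B) H (TA ⊗[k] TB)
    (inner.lTensor H)
      ∘ₗ ((LinearMap.mul' k H).rTensor
            ((H ⊗[k] (A ⊗[k] B)) ⊗[k] (H ⊗[k] (TA ⊗[k] TB))))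
      ∘ₗ mid4 k H (H ⊗[k] (A ⊗[k] B)) H (H ⊗[k] (TA ⊗[k] TB))
      ∘ₗ (TensorProduct.map
            (((TensorProduct.leftComm k A H B).toLinearMap.lTensor H)
              ∘ₗ (TensorProduct.leftComm k A H (H ⊗[k] B)).toLinearMap)
            (asc k H H (TA ⊗[k] TB)))
      ∘ₗ ((((Coalgebra.comul (R := k) (A := H)).rTensor (TA ⊗[k] TB)).lTensor
            (A ⊗[k] (H ⊗[k] (H ⊗[k] B)))))
      ∘ₗ ((((ρB.lTensor H ∘ₗ ρB).lTensor A)).rTensor (H ⊗[k] (TA ⊗[k] TB)))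
      ∘ₗ ((Gmap β Sinv ρB n).lTensor (A ⊗[k] B))

/-- the cup-product cochain map
`Ψ(φ ⊗ ψ)(a₀ ⋊ b₀ ⊗ ⋯ ⊗ aₙ ⋊ bₙ)
  = φ(ψ(b₀₍₀₎ ⊗ ⋯ ⊗ bₙ₍₀₎) ⊗ S⁻¹(b₀₍₋₁₎ ⋯ bₙ₍₋₁₎)·a₀ ⊗ ⋯ ⊗ S⁻¹(bₙ₍₋₁₎)·aₙ)`. -/
def Psi (β : H ⊗[k] A →ₗ[k] A) (Sinv : H →ₗ[k] H) (ρB : B →ₗ[k] H ⊗[k] B) (n : ℕ)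
    (φ : (M ⊗[k] (Tpow k A (n+1) : Type)) →ₗ[k] k)
    (ψ : (Tpow k B (n+1) : Type) →ₗ[k] M) :
    (Tpow k (A ⊗[k] B) (n+1) : Type) →ₗ[k] k :=
  φ ∘ₗ cmm k (Tpow k A (n+1) : Type) M
    ∘ₗ (ψ.lTensor (Tpow k A (n+1) : Type))
    ∘ₗ (TensorProduct.lid k ((Tpow k A (n+1) : Type) ⊗[k] (Tpow k B (n+1) : Type))).toLinearMap
    ∘ₗ ((Coalgebra.counit (R := k) (A := H)).rTensor
          ((Tpow k A (n+1) : Type) ⊗[k] (Tpow k B (n+1) : Type)))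
    ∘ₗ Gmap k β Sinv ρB (n+1)

end PsiSec

section Casts
variable {R : Type} [AddCommGroup R] [Module k R]

/-- transport along an equality of tensor-power indices. -/
def tcast (R : Type) [AddCommGroup R] [Module k R] {m n : ℕ} (e : m = n) :
    (Tpow k R m : Type) →ₗ[k] (Tpow k R n : Type) := by
  subst e; exact LinearMap.id

end Casts

section Iterates
variable {H : Type} [Ring H] [HopfAlgebra k H]

/-- iterated last coface on the HKRS complex `C^•_H(A,M)`, lifting a `p`-cochain to a
`(p+q)`-cochain (one factor of the Alexander--Whitney map). -/
def iterLastMA {A M : Type} [Ring A] [Algebra k A] [AddCommGroup M] [Module k M]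
    (β : H ⊗[k] A →ₗ[k] A) (Sinv : H →ₗ[k] H) (ρM : M →ₗ[k] H ⊗[k] M) (p : ℕ) :
    ∀ q : ℕ, ((M ⊗[k] (Tpow k A (p+1) : Type)) →ₗ[k] k) →
      ((M ⊗[k] (Tpow k A (p+q+1) : Type)) →ₗ[k] k)
  | 0, φ => φ
  | q+1, φ => faceMA k β Sinv ρM (p+q) (p+q+1) (iterLastMA β Sinv ρM p q φ)

/-- iterated zeroth coface on the complex `C^•_H(B,M)`, lifting a `q`-cochain to a
`(q+p)`-cochain (the other factor of the Alexander--Whitney map). -/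
def iterFace0CB {B M : Type} [Ring B] [Algebra k B] [AddCommGroup M] [Module k M]
    (ρB : B →ₗ[k] H ⊗[k] B) (act : M ⊗[k] H →ₗ[k] M) (q : ℕ) :
    ∀ p : ℕ, ((Tpow k B (q+1) : Type) →ₗ[k] M) → ((Tpow k B (q+p+1) : Type) →ₗ[k] M)
  | 0, ψ => ψ
  | p+1, ψ => faceCB k ρB act (q+p) 0 (iterFace0CB ρB act q p ψ)

/-- the cup product `⊔ = Ψ ∘ AW` of a `p`-cochain of `C^•_H(A,M)` and a `q`-cochain of
`C^•_H(B,M)`, a `(p+q)`-cochain of the cyclic complex of `A ⋊ B`. -/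
def cupAW {A B M : Type} [Ring A] [Algebra k A] [Ring B] [Algebra k B]
    [AddCommGroup M] [Module k M]
    (β : H ⊗[k] A →ₗ[k] A) (Sinv : H →ₗ[k] H) (ρB : B →ₗ[k] H ⊗[k] B)
    (ρM : M →ₗ[k] H ⊗[k] M) (act : M ⊗[k] H →ₗ[k] M) (p q : ℕ)
    (φ : (M ⊗[k] (Tpow k A (p+1) : Type)) →ₗ[k] k)
    (ψ : (Tpow k B (q+1) : Type) →ₗ[k] M) :
    (Tpow k (A ⊗[k] B) (p+q+1) : Type) →ₗ[k] k :=
  Psi k β Sinv ρB (p+q) (iterLastMA k β Sinv ρM p q φ)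
    ((iterFace0CB k ρB act q p ψ) ∘ₗ tcast k B (show p+q+1 = q+p+1 by omega))

end Iterates

/-! With the trivial action `m · h = ε(h) m`, stability and the left-hand side of the AYD
condition collapse by counitality of the coaction on `C`, the latter to `c ⊗ m₍₋₁₎ ⊗ m₍₀₎`.
The right-hand side becomes `c₍₀₎ ⊗ S(c₍₁₎⁽²⁾) m₍₋₁₎ c₍₁₎⁽¹⁾ ⊗ m₍₀₎`; by coassociativity this is
`c₍₀₎₍₀₎ ⊗ S(c₍₁₎) m₍₋₁₎ c₍₀₎₍₁₎ ⊗ m₍₀₎`, commutativity of the coaction moves `S(c₍₁₎) m₍₋₁₎`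
to the right of `c₍₀₎₍₁₎`, and then `c₍₁₎⁽¹⁾ S(c₍₁₎⁽²⁾) = ε(c₍₁₎)` collapses it as well. -/

section Maps
variable {k H : Type} [Field k] [Ring H] [Algebra k H]

@[simp]
lemma trivAct_tmul {M : Type} [AddCommGroup M] [Module k M] (ε : H →ₗ[k] k) (m : M) (h : H) :
    trivAct k H M ε (m ⊗ₜ h) = ε h • m := by
  simp [trivAct]

variable (k) in
/-- `sandwich S g ∘ₗ Δ` is the map `h ↦ S(h⁽²⁾) g h⁽¹⁾` of the AYD condition. -/
def sandwich (S : H →ₗ[k] H) (g : H) : H ⊗[k] H →ₗ[k] H :=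
  opMul k H (mul' k H) ∘ₗ (mulRight k g ∘ₗ S).lTensor H

@[simp]
lemma sandwich_tmul (S : H →ₗ[k] H) (g a b : H) : sandwich k S g (a ⊗ₜ b) = S b * g * a := by
  simp [sandwich, opMul]

end Maps

section Bialgebra
variable {k H : Type} [Field k] [Ring H] [Bialgebra k H]

lemma isCounitalR_trivR : IsCounitalR (H := H) k (trivR k H k) := by
  ext; simp [trivR]

lemma IsCounitalR.diagR {V W : Type} [AddCommGroup V] [Module k V] [AddCommGroup W] [Module k W]
    {ρV : V →ₗ[k] V ⊗[k] H} {ρW : W →ₗ[k] W ⊗[k] H}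
    (hV : IsCounitalR k ρV) (hW : IsCounitalR k ρW) :
    IsCounitalR k (diagR k (mul' k H) ρV ρW) := by
  have hmul : (TensorProduct.rid k (V ⊗[k] W)).toLinearMap
        ∘ₗ (Coalgebra.counit (R := k) (A := H)).lTensor (V ⊗[k] W)
        ∘ₗ (mul' k H).lTensor (V ⊗[k] W) ∘ₗ mid4 k V H W H
      = TensorProduct.map
          ((TensorProduct.rid k V).toLinearMap ∘ₗ (Coalgebra.counit (R := k) (A := H)).lTensor V)
          ((TensorProduct.rid k W).toLinearMap ∘ₗ (Coalgebra.counit (R := k) (A := H)).lTensor W) := by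
    ext v a w b
    simp [TensorProduct.smul_tmul', TensorProduct.tmul_smul, mul_smul,
      smul_comm (Coalgebra.counit (R := k) a)]
  unfold IsCounitalR at *
  simp only [HCN.diagR, ← LinearMap.comp_assoc] at hmul hV hW ⊢
  rw [hmul, ← TensorProduct.map_comp, hV, hW, TensorProduct.map_id]

lemma isCounitalR_tpowρR {C : Type} [AddCommGroup C] [Module k C] {ρC : C →ₗ[k] C ⊗[k] H}
    (hC : IsCounitalR k ρC) : ∀ n : ℕ, IsCounitalR k (TpowρR k (mul' k H) ρC n)
  | 0 => isCounitalR_trivR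
  | n + 1 => hC.diagR (isCounitalR_tpowρR hC n)

lemma twist_trivAct_tmul {M : Type} [AddCommGroup M] [Module k M] (S : H →ₗ[k] H) (h g : H)
    (m : M) :
    Twist k (mul' k H) Coalgebra.comul S (trivAct k H M Coalgebra.counit) (h ⊗ₜ (g ⊗ₜ m))
      = sandwich k S g (Coalgebra.comul h) ⊗ₜ m := by
  have hcounit : Coalgebra.comul h = ((TensorProduct.lid k H).toLinearMap
      ∘ₗ (Coalgebra.counit (R := k) (A := H)).rTensor H).lTensor H
        ((Coalgebra.comul (R := k) (A := H)).lTensor H (Coalgebra.comul h)) := by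
    have hid : (TensorProduct.lid k H).toLinearMap
        ∘ₗ (Coalgebra.counit (R := k) (A := H)).rTensor H ∘ₗ Coalgebra.comul = LinearMap.id := by
      rw [Coalgebra.rTensor_counit_comp_comul]; ext; simp
    rw [← lTensor_comp_apply, comp_assoc, hid, lTensor_id, id_apply]
  simp only [Twist, comp_apply, rTensor_tmul]
  conv_rhs => rw [hcounit]
  generalize (Coalgebra.comul (R := k) (A := H)).lTensor H (Coalgebra.comul h) = x
  induction x using TensorProduct.induction_on with
  | zero => simp
  | tmul a y =>
    induction y using TensorProduct.induction_on with
    | zero => simp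
    | tmul b c => simp [opMul, TensorProduct.smul_tmul', TensorProduct.tmul_smul, mul_assoc]
    | add y₁ y₂ h₁ h₂ => simp_all [tmul_add, add_tmul]
  | add x₁ x₂ h₁ h₂ => simp_all [add_tmul]

end Bialgebra

section CommutativeCoaction
variable {k H C : Type} [Field k] [AddCommGroup C] [Module k C]

lemma lTensor_opMul_assoc_rTensor_eq [Ring H] [Algebra k H] {ρC : C →ₗ[k] C ⊗[k] H}
    (hcomm : ∀ h : H,
      ((LinearMap.mulLeft k h).lTensor C) ∘ₗ ρC = ((LinearMap.mulRight k h).lTensor C) ∘ₗ ρC) :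
    (opMul k H (mul' k H)).lTensor C ∘ₗ asc k C H H ∘ₗ ρC.rTensor H
      = (mul' k H).lTensor C ∘ₗ asc k C H H ∘ₗ ρC.rTensor H := by
  refine TensorProduct.ext' fun c h => ?_
  have hL : (opMul k H (mul' k H)).lTensor C ∘ₗ asc k C H H ∘ₗ (mk k (C ⊗[k] H) H).flip h
      = (mulLeft k h).lTensor C := by
    ext; simp [opMul]
  have hR : (mul' k H).lTensor C ∘ₗ asc k C H H ∘ₗ (mk k (C ⊗[k] H) H).flip h
      = (mulRight k h).lTensor C := by
    ext; simp
  simpa using congr($hL (ρC c)).trans (congr($(hcomm h) c).trans congr($hR (ρC c)).symm)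

lemma lTensor_sandwich_comul_coaction [Ring H] [HopfAlgebra k H] {ρC : C →ₗ[k] C ⊗[k] H}
    (hco : IsCoassocR k ρC) (hcu : IsCounitalR k ρC)
    (hcomm : ∀ h : H,
      ((LinearMap.mulLeft k h).lTensor C) ∘ₗ ρC = ((LinearMap.mulRight k h).lTensor C) ∘ₗ ρC)
    (g : H) (c : C) :
    ((sandwich k (HopfAlgebra.antipode k) g ∘ₗ Coalgebra.comul).lTensor C) (ρC c) = c ⊗ₜ g := by
  set f := mulRight k g ∘ₗ HopfAlgebra.antipode k (A := H)
  have coassoc : (Coalgebra.comul (R := k) (A := H)).lTensor C (ρC c)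
      = asc k C H H (ρC.rTensor H (ρC c)) := by
    simpa using congr(asc k C H H ($hco c)).symm
  have natural : ∀ y, (f.lTensor H).lTensor C (asc k C H H (ρC.rTensor H y))
      = asc k C H H (ρC.rTensor H (f.lTensor C y)) := fun y => by
    have hassoc : (f.lTensor H).lTensor C ∘ₗ asc k C H H
        = asc k C H H ∘ₗ f.lTensor (C ⊗[k] H) := by
      ext; simp
    have hswap : f.lTensor (C ⊗[k] H) ∘ₗ ρC.rTensor H = ρC.rTensor H ∘ₗ f.lTensor C := by
      rw [lTensor_comp_rTensor, rTensor_comp_lTensor]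
    exact congr($hassoc (ρC.rTensor H y)).trans congr(asc k C H H ($hswap y))
  have antipode : mul' k H ∘ₗ f.lTensor H ∘ₗ Coalgebra.comul
      = toSpanSingleton k H g ∘ₗ Coalgebra.counit := by
    have hmul : mul' k H ∘ₗ f.lTensor H
        = mulRight k g ∘ₗ mul' k H ∘ₗ (HopfAlgebra.antipode k).lTensor H := by
      ext; simp [f, mul_assoc]
    rw [← comp_assoc, hmul, comp_assoc, comp_assoc, HopfAlgebra.mul_antipode_lTensor_comul]
    ext; simp [Algebra.smul_def]
  have counit : (toSpanSingleton k H g ∘ₗ Coalgebra.counit).lTensor C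
      = (mk k C H).flip g ∘ₗ (TensorProduct.rid k C).toLinearMap
          ∘ₗ (Coalgebra.counit (R := k) (A := H)).lTensor C := by
    ext; simp
  calc ((sandwich k (HopfAlgebra.antipode k) g ∘ₗ Coalgebra.comul).lTensor C) (ρC c)
      = (opMul k H (mul' k H)).lTensor C (asc k C H H (ρC.rTensor H (f.lTensor C (ρC c)))) := by
        rw [← natural, ← coassoc]; simp only [sandwich, f, lTensor_comp, comp_apply]
    _ = (mul' k H).lTensor C (asc k C H H (ρC.rTensor H (f.lTensor C (ρC c)))) :=
        congr($(lTensor_opMul_assoc_rTensor_eq hcomm) (f.lTensor C (ρC c)))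
    _ = ((toSpanSingleton k H g ∘ₗ Coalgebra.counit).lTensor C) (ρC c) := by
        rw [← natural, ← coassoc, ← antipode]; simp only [lTensor_comp, comp_apply]
    _ = c ⊗ₜ g := by
        rw [counit]
        exact congr((mk k C H).flip g ($hcu c))

end CommutativeCoaction

section SAYD
variable {k H C M : Type} [Field k] [Ring H] [HopfAlgebra k H] [AddCommGroup C] [Module k C]
  [AddCommGroup M] [Module k M]

lemma stabMapC_trivAct_eq_id {V : Type} [AddCommGroup V] [Module k V] {ρV : V →ₗ[k] V ⊗[k] H}
    (hV : IsCounitalR k ρV) :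
    stabMapC k ρV (trivAct k H M Coalgebra.counit) = LinearMap.id := by
  have hcounit : (trivAct k H M Coalgebra.counit ∘ₗ cmm k H M).lTensor V ∘ₗ asc k V H M
      = ((TensorProduct.rid k V).toLinearMap
          ∘ₗ (Coalgebra.counit (R := k) (A := H)).lTensor V).rTensor M := by
    ext; simp [TensorProduct.smul_tmul', TensorProduct.tmul_smul]
  rw [stabMapC, ← comp_assoc, hcounit, ← rTensor_comp, comp_assoc, hV, rTensor_id]

lemma aydCondC_trivAct {ρC : C →ₗ[k] C ⊗[k] H} (hco : IsCoassocR k ρC) (hcu : IsCounitalR k ρC)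
    (hcomm : ∀ h : H,
      ((LinearMap.mulLeft k h).lTensor C) ∘ₗ ρC = ((LinearMap.mulRight k h).lTensor C) ∘ₗ ρC)
    (ρM : M →ₗ[k] H ⊗[k] M) :
    AYDcondC k ρC ρM (trivAct k H M Coalgebra.counit) := by
  refine TensorProduct.ext' fun c m => ?_
  set T := Twist k (mul' k H) Coalgebra.comul (HopfAlgebra.antipode k)
    (trivAct k H M Coalgebra.counit)
  have hpure : ∀ (g : H) (m' : M), T.lTensor C ∘ₗ (TensorProduct.assoc k C H (H ⊗[k] M)).toLinearMap
        ∘ₗ (mk k (C ⊗[k] H) (H ⊗[k] M)).flip (g ⊗ₜ m')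
      = asc k C H M ∘ₗ (mk k (C ⊗[k] H) M).flip m'
          ∘ₗ (sandwich k (HopfAlgebra.antipode k) g ∘ₗ Coalgebra.comul).lTensor C := by
    intro g m'
    ext; simp [T, twist_trivAct_tmul]
  have hTwist : ∀ y : H ⊗[k] M,
      T.lTensor C (TensorProduct.assoc k C H (H ⊗[k] M) (ρC c ⊗ₜ y)) = c ⊗ₜ y := by
    intro y
    induction y using TensorProduct.induction_on with
    | zero => simp
    | tmul g m' =>
      simpa [lTensor_sandwich_comul_coaction hco hcu hcomm] using congr($(hpure g m') (ρC c))
    | add y₁ y₂ h₁ h₂ => simp only [tmul_add, map_add, h₁, h₂]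
  have hcoact : (ρM.lTensor H).lTensor C ∘ₗ asc k C H M ∘ₗ (mk k (C ⊗[k] H) M).flip m
      = (TensorProduct.assoc k C H (H ⊗[k] M)).toLinearMap
          ∘ₗ (mk k (C ⊗[k] H) (H ⊗[k] M)).flip (ρM m) := by
    ext; simp
  calc ((ρM ∘ₗ trivAct k H M Coalgebra.counit ∘ₗ cmm k H M).lTensor C ∘ₗ asc k C H M
          ∘ₗ ρC.rTensor M) (c ⊗ₜ m)
      = ρM.lTensor C (stabMapC k ρC (trivAct k H M Coalgebra.counit) (c ⊗ₜ m)) := by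
        simp only [stabMapC, lTensor_comp, comp_apply]
    _ = T.lTensor C (TensorProduct.assoc k C H (H ⊗[k] M) (ρC c ⊗ₜ ρM m)) := by
        rw [stabMapC_trivAct_eq_id hcu, hTwist]; rfl
    _ = ((T ∘ₗ ρM.lTensor H).lTensor C ∘ₗ asc k C H M ∘ₗ ρC.rTensor M) (c ⊗ₜ m) := by
        simp only [lTensor_comp, comp_apply, rTensor_tmul]
        exact congr(T.lTensor C ($hcoact (ρC c))).symm

end SAYD

theorem stmt11_general (k H C M : Type) [Field k] [Ring H] [HopfAlgebra k H]
    [AddCommGroup C] [Module k C] [Coalgebra k C] [AddCommGroup M] [Module k M]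
    (ρC : C →ₗ[k] C ⊗[k] H) (hC : IsComodCoalgR k ρC)
    (ρM : M →ₗ[k] H ⊗[k] M)
    (hcomm : ∀ h : H,
      ((LinearMap.mulLeft k h).lTensor C) ∘ₗ ρC = ((LinearMap.mulRight k h).lTensor C) ∘ₗ ρC) :
    IsHCSAYD k ρC ρM (trivAct k H M (Coalgebra.counit (R := k))) := by
  obtain ⟨hco, hcu, -, -⟩ := hC
  refine ⟨aydCondC_trivAct hco hcu hcomm ρM, fun n x _ => ?_⟩
  rw [stabMapC_trivAct_eq_id (isCounitalR_tpowρR hcu (n + 1))]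
  rfl

/-- If `H` coacts commutatively on the right `H`-comodule coalgebra `C`
(`c₍₀₎ ⊗ h c₍₁₎ = c₍₀₎ ⊗ c₍₁₎ h`), then any left `H`-comodule `M` with the trivial right
action `m · h = ε(h) m` is an `H^C`-SAYD module. -/
theorem stmt11 (k H C M : Type) [Field k] [Ring H] [HopfAlgebra k H]
    [AddCommGroup C] [Module k C] [Coalgebra k C] [AddCommGroup M] [Module k M]
    (ρC : C →ₗ[k] C ⊗[k] H) (hC : IsComodCoalgR k ρC)
    (ρM : M →ₗ[k] H ⊗[k] M) (hM1 : IsCoassocL k ρM) (hM2 : IsCounitalL k ρM)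
    (hcomm : ∀ h : H,
      ((LinearMap.mulLeft k h).lTensor C) ∘ₗ ρC = ((LinearMap.mulRight k h).lTensor C) ∘ₗ ρC) :
    IsHCSAYD k ρC ρM (trivAct k H M (Coalgebra.counit (R := k))) :=
  stmt11_general k H C M ρC hC ρM hcomm

end HCN
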